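/- Let α, β, δ, x₀, y₀ be real numbers with α > β, δ > 0, y₀ > 0 and x₀ > y₀·δ/(α−β), and define x : ℝ → ℝ by x(t) = (x₀ + y₀·δ/(β−α))·e^{αt} − y₀·(δ/(β−α))·e^{βt}. If moreover α > 0, then x(t) → +∞ as t → ∞, and x(t) > 0 for all t ≥ 0. -/

import Mathlib

open Real Filter

theorem tendsto_mul_exp_add_mul_exp_atTop {a b c d : ℝ} (ha : 0 < a) (hc : 0 < c) (hd : 0 ≤ d) :
    Tendsto (fun t => c * exp (a * t) + d * exp (b * t)) atTop atTop :=
  tendsto_atTop_add_right_of_le _ 0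
    ((tendsto_exp_atTop.comp (tendsto_id.const_mul_atTop ha)).const_mul_atTop hc)
    fun _ => by positivity

/-- If `α > β`, `δ > 0`, `y₀ > 0`, `x₀ > y₀·δ/(α−β)` and `α > 0`,
the solution `x(t)` of the healthy-population ODE tends to `+∞`, and stays
positive for all `t ≥ 0`. -/
theorem healthy_population_escapes (α β δ x₀ y₀ : ℝ)
    (hαβ : β < α) (hδ : 0 < δ) (hy₀ : 0 < y₀) (hx₀ : y₀ * δ / (α - β) < x₀)
    (hα : 0 < α)
    (x : ℝ → ℝ)
    (hx : ∀ t, x t = (x₀ + y₀ * δ / (β - α)) * exp (α * t)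
        - y₀ * (δ / (β - α)) * exp (β * t)) :
    Tendsto x atTop atTop ∧ ∀ t : ℝ, 0 ≤ t → 0 < x t := by
  set A := y₀ * δ / (α - β)
  have hA : 0 < A := div_pos (mul_pos hy₀ hδ) (sub_pos.2 hαβ)
  have hxA : x = fun t => (x₀ - A) * exp (α * t) + A * exp (β * t) := by
    funext t
    rw [hx t, show β - α = -(α - β) by ring, div_neg, div_neg, mul_div_assoc]
    ring
  subst hxA
  refine ⟨tendsto_mul_exp_add_mul_exp_atTop hα (sub_pos.2 hx₀) hA.le, fun t _ => ?_⟩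
  exact add_pos (mul_pos (sub_pos.2 hx₀) (exp_pos _)) (mul_pos hA (exp_pos _))
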